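/- The automaton group of automaton 887 is non-contracting: bc satisfies bc(00) = 00, (bc)|_{00} = bc, and bc has infinite order. -/

import Mathlib

namespace Stmt14


/-- A Mealy automaton over the binary alphabet with state set `S`. -/
structure Mealy (S : Type) where
  /-- transition function -/
  δ : S → Bool → S
  /-- output function -/
  τ : S → Bool → Bool

namespace Mealy

variable {S : Type} (M : Mealy S)

/-- The state reached from `q` after reading the first `n` letters of `w`. -/
def stateAt (q : S) (w : ℕ → Bool) : ℕ → S
  | 0 => q
  | n + 1 => M.δ (stateAt q w n) (w n)

/-- The action of state `q` on infinite words. -/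
def act (q : S) (w : ℕ → Bool) : ℕ → Bool :=
  fun n => M.τ (M.stateAt q w n) (w n)

/-- The inverse automaton (for automata whose output functions are involutions). -/
def inv : Mealy S := ⟨fun q b => M.δ q (M.τ q b), M.τ⟩

theorem stateAt_inv_act (h : ∀ q b, M.τ q (M.τ q b) = b) (q : S) (w : ℕ → Bool) :
    ∀ n, M.inv.stateAt q (M.act q w) n = M.stateAt q w n := by
  intro n
  induction n with
  | zero => rfl
  | succ n ih =>
    show M.inv.δ (M.inv.stateAt q (M.act q w) n) (M.act q w n) = M.δ (M.stateAt q w n) (w n)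
    rw [ih]
    show M.δ (M.stateAt q w n) (M.τ (M.stateAt q w n) (M.τ (M.stateAt q w n) (w n))) = _
    rw [h]

theorem inv_act (h : ∀ q b, M.τ q (M.τ q b) = b) (q : S) (w : ℕ → Bool) :
    M.inv.act q (M.act q w) = w := by
  funext n
  show M.inv.τ (M.inv.stateAt q (M.act q w) n) (M.act q w n) = w n
  rw [stateAt_inv_act M h]
  show M.τ (M.stateAt q w n) (M.τ (M.stateAt q w n) (w n)) = w n
  rw [h]

theorem inv_inv (h : ∀ q b, M.τ q (M.τ q b) = b) : M.inv.inv = M := by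
  obtain ⟨d, t⟩ := M
  simp only [inv]
  congr 1
  funext q b
  exact congrArg (d q) (h q b)

/-- The permutation of the set of infinite binary words defined by state `q`. -/
def perm (h : ∀ q b, M.τ q (M.τ q b) = b) (q : S) : Equiv.Perm (ℕ → Bool) where
  toFun := M.act q
  invFun := M.inv.act q
  left_inv := fun w => M.inv_act h q w
  right_inv := fun w => by
    have h2 : ∀ q b, M.inv.τ q (M.inv.τ q b) = b := h
    have := M.inv.inv_act h2 q w
    rwa [M.inv_inv h] at this

end Mealy

/-- Prepend a finite word to an infinite word. -/
def cat (u : List Bool) (w : ℕ → Bool) : ℕ → Bool :=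
  fun n => u.getD n (w (n - u.length))

/-- The (semantic) restriction of a transformation of infinite words to the
subtree indexed by the finite word `u`. -/
def resW (f : (ℕ → Bool) → ℕ → Bool) (u : List Bool) : (ℕ → Bool) → ℕ → Bool :=
  fun w n => f (cat u w) (n + u.length)

/-- The periodic infinite word with period `u`. -/
def per (u : List Bool) : ℕ → Bool := fun n => u.getD (n % u.length) false

/-- Left-shift equivalence of infinite words: they share a common infinite tail. -/
def seq (u v : ℕ → Bool) : Prop := ∃ k l : ℕ, ∀ n, u (n + k) = v (n + l)

inductive St : Type
  | a | b | c
deriving DecidableEq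

instance instFintypeSt : Fintype St :=
  Fintype.ofList [St.a, St.b, St.c] (by intro x; cases x <;> simp)

/-- Automaton 887. -/
def M : Mealy St where
  δ := fun q x => match q, x with
    | .a, false => .b | .a, true => .b
    | .b, false => .c | .b, true => .c
    | .c, false => .b | .c, true => .a
  τ := fun q x => match q with
    | .a => !x
    | .b => x
    | .c => x

theorem M_inv : ∀ q x, M.τ q (M.τ q x) = x := by decide

/-- The automorphism of the binary tree boundary defined by state `a`. -/
def a : Equiv.Perm (ℕ → Bool) := M.perm M_inv .a

/-- The automorphism of the binary tree boundary defined by state `b`. -/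
def b : Equiv.Perm (ℕ → Bool) := M.perm M_inv .b

/-- The automorphism of the binary tree boundary defined by state `c`. -/
def c : Equiv.Perm (ℕ → Bool) := M.perm M_inv .c

/-!
In wreath-recursion notation `g = π (g₀, g₁)` we have `a = σ (b, b)`, `b = (c, c)`,
`c = (b, a)` and `b² = 1`, hence `bc = (cb, ca)`, `ca = σ (ab, 1)` and `ab = σ (bc, bc)`.
So `(bc)ⁿ = 1` forces `(ca)ⁿ = 1`, hence `n = 2k` and `(ab)ᵏ = 1`, hence `k = 2l` and
`(bc)²ˡ = 1`: halving forever, `bc` has infinite order. As `bc` fixes `00` with section `bc`,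
every power of `bc` is its own restriction at `(00)ʲ` for all `j`, so a nucleus would have to
contain all of these infinitely many distinct powers.
-/

theorem cat_append (u v : List Bool) (w : ℕ → Bool) :
    cat (u ++ v) w = cat u (cat v w) := by
  funext n
  rcases lt_or_ge n u.length with hn | hn
  · simp only [cat, List.getD_append _ _ _ _ hn, List.getD_eq_getElem _ _ hn]
  · simp only [cat, List.getD_append_right _ _ _ _ hn, List.getD_eq_default _ _ hn,
      List.length_append, Nat.sub_add_eq]

theorem cat_add_length (u : List Bool) (v : ℕ → Bool) (n : ℕ) :
    cat u v (n + u.length) = v n := by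
  simp [cat]

theorem cat_singleton_succ (x : Bool) (w : ℕ → Bool) (n : ℕ) : cat [x] w (n + 1) = w n := rfl

theorem cat_injective (u : List Bool) : Function.Injective (cat u) := fun v w h =>
  funext fun n => by rw [← cat_add_length u v, h, cat_add_length]

theorem cat_head_tail (w : ℕ → Bool) : cat [w 0] (fun n => w (n + 1)) = w := by
  funext n; cases n <;> rfl

theorem resW_eq_self {f : (ℕ → Bool) → ℕ → Bool} {u : List Bool}
    (hf : ∀ w, f (cat u w) = cat u (f w)) : resW f u = f := by
  funext w n
  simp only [resW, hf, cat_add_length]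

theorem apply_cat_flatten_replicate {f : (ℕ → Bool) → ℕ → Bool} {u : List Bool}
    (hf : ∀ w, f (cat u w) = cat u (f w)) (k : ℕ) (w : ℕ → Bool) :
    f (cat (List.replicate k u).flatten w) = cat (List.replicate k u).flatten (f w) := by
  induction k generalizing w with
  | zero => rfl
  | succ k ih => rw [List.replicate_succ, List.flatten_cons, cat_append, cat_append, hf, ih]

section PermPowers

variable {f g : Equiv.Perm (ℕ → Bool)}

theorem pow_apply_cat_of_apply_cat {u : List Bool} (h : ∀ w, f (cat u w) = cat u (g w))
    (n : ℕ) (w : ℕ → Bool) : (f ^ n) (cat u w) = cat u ((g ^ n) w) := by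
  induction n generalizing w with
  | zero => rfl
  | succ n ih =>
    rw [pow_succ', Equiv.Perm.mul_apply, ih, h, ← Equiv.Perm.mul_apply, ← pow_succ']

theorem pow_eq_one_of_apply_cat {u : List Bool} (h : ∀ w, f (cat u w) = cat u (g w)) {n : ℕ}
    (hn : f ^ n = 1) : g ^ n = 1 :=
  Equiv.ext fun w => cat_injective u <| by rw [← pow_apply_cat_of_apply_cat h, hn]; rfl

theorem pow_apply_zero_of_apply_cat_zero (h : ∀ x w, f (cat [x] w) 0 = !x) (n : ℕ)
    (w : ℕ → Bool) : (f ^ n) w 0 = (w 0 ^^ n.bodd) := by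
  induction n with
  | zero => simp
  | succ n ih =>
    rw [pow_succ', Equiv.Perm.mul_apply, ← cat_head_tail ((f ^ n) w), h, ih]
    simp

theorem even_of_pow_eq_one_of_apply_cat_zero (h : ∀ x w, f (cat [x] w) 0 = !x) {n : ℕ}
    (hn : f ^ n = 1) : Even n := by
  have := pow_apply_zero_of_apply_cat_zero h n fun _ => false
  rw [hn] at this
  simpa [Nat.even_iff, Nat.mod_two_of_bodd] using this

end PermPowers

def IsContracting (G : Set (Equiv.Perm (ℕ → Bool))) : Prop :=
  ∃ N : Finset (Equiv.Perm (ℕ → Bool)),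
    ∀ g ∈ G, ∃ k : ℕ, ∀ u : List Bool, k ≤ u.length → ∃ m ∈ N, resW ⇑g u = ⇑m

theorem not_isContracting_of_apply_cat {G : Subgroup (Equiv.Perm (ℕ → Bool))}
    {g : Equiv.Perm (ℕ → Bool)} (hg : g ∈ G) (hinf : ¬ IsOfFinOrder g) {u : List Bool}
    (hu : u ≠ []) (hfix : ∀ w, g (cat u w) = cat u (g w)) : ¬ IsContracting G := by
  rintro ⟨N, hN⟩
  have hpow : ∀ n, g ^ n ∈ N := fun n => by
    obtain ⟨k, hk⟩ := hN (g ^ n) (G.pow_mem hg n)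
    have hlen : k ≤ (List.replicate k u).flatten.length := by
      simpa using Nat.le_mul_of_pos_right k (List.length_pos_iff.2 hu)
    obtain ⟨m, hm, hres⟩ := hk _ hlen
    rw [resW_eq_self (apply_cat_flatten_replicate (pow_apply_cat_of_apply_cat hfix n) k)] at hres
    exact Equiv.coe_fn_injective hres ▸ hm
  exact Set.infinite_of_injective_forall_mem (injective_pow_iff_not_isOfFinOrder.2 hinf) hpow
    N.finite_toSet

namespace Mealy

variable {S : Type} (A : Mealy S)

theorem stateAt_cat_singleton (q : S) (x : Bool) (w : ℕ → Bool) :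
    ∀ n, A.stateAt q (cat [x] w) (n + 1) = A.stateAt (A.δ q x) w n
  | 0 => rfl
  | n + 1 => by
    rw [stateAt, stateAt_cat_singleton q x w n, cat_singleton_succ]
    rfl

theorem act_cat_singleton (q : S) (x : Bool) (w : ℕ → Bool) :
    A.act q (cat [x] w) = cat [A.τ q x] (A.act (A.δ q x) w) := by
  funext n
  cases n with
  | zero => rfl
  | succ n => simp only [act, stateAt_cat_singleton, cat_singleton_succ]

/-- When the transitions do not see the output, the inverse automaton is the automaton itself. -/
theorem perm_inv_eq_self (h : ∀ q x, A.τ q (A.τ q x) = x)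
    (hδ : ∀ q x, A.δ q (A.τ q x) = A.δ q x) (q : S) : (A.perm h q)⁻¹ = A.perm h q := by
  have hA : A.inv = A := by
    obtain ⟨δ, τ⟩ := A
    simp only [inv, Mealy.mk.injEq, and_true]
    funext q x
    exact hδ q x
  ext w : 1
  change A.inv.act q w = A.act q w
  rw [hA]

end Mealy

theorem a_cat (x : Bool) (w : ℕ → Bool) : a (cat [x] w) = cat [!x] (b w) := by
  cases x <;> exact M.act_cat_singleton .a _ w

theorem b_cat (x : Bool) (w : ℕ → Bool) : b (cat [x] w) = cat [x] (c w) := by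
  cases x <;> exact M.act_cat_singleton .b _ w

theorem c_cat_false (w : ℕ → Bool) : c (cat [false] w) = cat [false] (b w) :=
  M.act_cat_singleton .c false w

theorem c_cat_true (w : ℕ → Bool) : c (cat [true] w) = cat [true] (a w) :=
  M.act_cat_singleton .c true w

theorem b_mul_self : b * b = 1 :=
  mul_eq_one_iff_eq_inv.2 (M.perm_inv_eq_self M_inv (by decide) .b).symm

theorem bc_cat_true (w : ℕ → Bool) : (b * c) (cat [true] w) = cat [true] ((c * a) w) := by
  simp only [Equiv.Perm.mul_apply, c_cat_true, b_cat]

theorem ca_cat_zero (x : Bool) (w : ℕ → Bool) : (c * a) (cat [x] w) 0 = !x := by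
  cases x <;> simp only [Equiv.Perm.mul_apply, a_cat, Bool.not_false, Bool.not_true,
    c_cat_true, c_cat_false] <;> rfl

theorem ca_sq_cat_false (w : ℕ → Bool) :
    ((c * a) ^ 2) (cat [false] w) = cat [false] ((a * b) w) := by
  simp only [sq, Equiv.Perm.mul_apply, a_cat, Bool.not_false, Bool.not_true, c_cat_true,
    c_cat_false, ← Equiv.Perm.mul_apply b b, b_mul_self, Equiv.Perm.one_apply]

theorem ab_cat (x : Bool) (w : ℕ → Bool) : (a * b) (cat [x] w) = cat [!x] ((b * c) w) := by
  simp only [Equiv.Perm.mul_apply, b_cat, a_cat]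

theorem ab_sq_cat (x : Bool) (w : ℕ → Bool) :
    ((a * b) ^ 2) (cat [x] w) = cat [x] (((b * c) ^ 2) w) := by
  rw [sq, Equiv.Perm.mul_apply, ab_cat, ab_cat, Bool.not_not, ← Equiv.Perm.mul_apply, ← sq]

theorem ab_cat_zero (x : Bool) (w : ℕ → Bool) : (a * b) (cat [x] w) 0 = !x := by
  rw [ab_cat]; rfl

theorem bc_cat_false_false (w : ℕ → Bool) :
    (b * c) (cat [false, false] w) = cat [false, false] ((b * c) w) := by
  rw [show [false, false] = [false] ++ [false] from rfl, cat_append, cat_append]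
  simp only [Equiv.Perm.mul_apply, c_cat_false, b_cat]

theorem bc_pow_half_eq_one {n : ℕ} (hn : (b * c) ^ n = 1) :
    ∃ m, n = 2 * m ∧ (b * c) ^ m = 1 := by
  have hca : (c * a) ^ n = 1 := pow_eq_one_of_apply_cat bc_cat_true hn
  obtain ⟨k, rfl⟩ := even_of_pow_eq_one_of_apply_cat_zero ca_cat_zero hca
  have hab : (a * b) ^ k = 1 :=
    pow_eq_one_of_apply_cat ca_sq_cat_false (by rwa [← pow_mul, two_mul])
  obtain ⟨l, rfl⟩ := even_of_pow_eq_one_of_apply_cat_zero ab_cat_zero hab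
  have hbc : ((b * c) ^ 2) ^ l = 1 :=
    pow_eq_one_of_apply_cat (ab_sq_cat false) (by rwa [← pow_mul, two_mul])
  exact ⟨2 * l, by ring, by rwa [← pow_mul] at hbc⟩

theorem not_isOfFinOrder_bc : ¬ IsOfFinOrder (b * c) := by
  rw [isOfFinOrder_iff_pow_eq_one]
  rintro ⟨n, hn0, hn⟩
  induction n using Nat.strong_induction_on with
  | _ n ih =>
    obtain ⟨m, rfl, hm⟩ := bc_pow_half_eq_one hn
    exact ih m (by omega) (by omega) hm

/-- The automaton group of automaton 887 is non-contracting: `bc(00) = 00`,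
`(bc)|₀₀ = bc`, and `bc` has infinite order. -/
theorem automaton887_noncontracting :
    (∀ w : ℕ → Bool, (b * c) (cat [false, false] w) = cat [false, false] ((b * c) w)) ∧
    (∀ n : ℕ, 1 ≤ n → (b * c) ^ n ≠ 1) ∧
    ¬ ∃ N : Finset (Equiv.Perm (ℕ → Bool)),
      ∀ g ∈ Subgroup.closure ({a, b, c} : Set (Equiv.Perm (ℕ → Bool))),
        ∃ k : ℕ, ∀ u : List Bool, k ≤ u.length → ∃ m ∈ N, resW ⇑g u = ⇑m := by
  have hbc : b * c ∈ Subgroup.closure ({a, b, c} : Set (Equiv.Perm (ℕ → Bool))) :=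
    mul_mem (Subgroup.subset_closure (by simp)) (Subgroup.subset_closure (by simp))
  refine ⟨bc_cat_false_false, fun n hn h => ?_, ?_⟩
  · exact not_isOfFinOrder_bc (isOfFinOrder_iff_pow_eq_one.2 ⟨n, hn, h⟩)
  · exact not_isContracting_of_apply_cat hbc not_isOfFinOrder_bc (by simp) bc_cat_false_false

end Stmt14
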